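/- Let (F,R) be a metric space and K ⊆ F a nonempty compact subset. Suppose there exists α ∈ (0, 1/2) such that Σ_{k≥1} N_R(K, 2^{-k})^2 · exp(−2^{αk}) < ∞. Then ∫₀¹ ( log N_R(K, u⁴) )^{1/2} du < ∞. -/

import Mathlib

open MeasureTheory Set
open scoped ENNReal

/-- The metric entropy `N_d(K, ε)` of a subset `K` of a metric space: the minimal cardinality
of a finite subset `A ⊆ K` such that every point of `K` is within distance `ε` of `A`. -/
noncomputable def coveringNumber {S : Type*} [MetricSpace S] (K : Set S) (ε : ℝ) : ℕ :=
  sInf {n : ℕ | ∃ A : Finset S, ↑A ⊆ K ∧ A.card = n ∧ ∀ x ∈ K, ∃ a ∈ A, dist x a ≤ ε}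

/-!
Summability forces `N(2^{-(k+1)})² ≤ M exp(2^{α(k+1)})` for all `k`. Comparing an arbitrary
scale `ε ∈ (0,1]` with the dyadic scale just below it gives `log N(ε) ≤ log M + (2/ε)^α`, so at
`ε = u⁴` the integrand is at most `√(log M) + 2^{α/2} u^{-2α}`, which is integrable on `(0,1)`
because `2α < 1`.
-/

section CoveringNumber

variable {S : Type*} [MetricSpace S] {K : Set S}

lemma coveringNumber_le_card {ε : ℝ} {A : Finset S} (hA : ↑A ⊆ K)
    (hcov : ∀ x ∈ K, ∃ a ∈ A, dist x a ≤ ε) : coveringNumber K ε ≤ A.card :=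
  Nat.sInf_le ⟨A, hA, rfl, hcov⟩

lemma IsCompact.exists_finset_card_eq_coveringNumber (hK : IsCompact K) {ε : ℝ} (hε : 0 < ε) :
    ∃ A : Finset S, ↑A ⊆ K ∧ A.card = coveringNumber K ε ∧
      ∀ x ∈ K, ∃ a ∈ A, dist x a ≤ ε := by
  obtain ⟨t, htK, htf, hcov⟩ := finite_cover_balls_of_compact hK hε
  have hmem : coveringNumber K ε ∈
      {n : ℕ | ∃ A : Finset S, ↑A ⊆ K ∧ A.card = n ∧ ∀ x ∈ K, ∃ a ∈ A, dist x a ≤ ε} := by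
    refine Nat.sInf_mem ⟨_, htf.toFinset, by simpa using htK, rfl, fun x hx => ?_⟩
    obtain ⟨a, ha, hxa⟩ := mem_iUnion₂.1 (hcov hx)
    exact ⟨a, htf.mem_toFinset.2 ha, (Metric.mem_ball.1 hxa).le⟩
  exact hmem

lemma IsCompact.coveringNumber_anti (hK : IsCompact K) {ε ε' : ℝ} (hε : 0 < ε) (h : ε ≤ ε') :
    coveringNumber K ε' ≤ coveringNumber K ε := by
  obtain ⟨A, hAK, hcard, hcov⟩ := hK.exists_finset_card_eq_coveringNumber hε
  refine hcard ▸ coveringNumber_le_card hAK fun x hx => ?_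
  obtain ⟨a, ha, hxa⟩ := hcov x hx
  exact ⟨a, ha, hxa.trans h⟩

lemma IsCompact.coveringNumber_sq_le_of_dyadic (hK : IsCompact K) {α M : ℝ} (hα : 0 ≤ α)
    (hM : 0 ≤ M) (hdyadic : ∀ k : ℕ, (coveringNumber K ((2 : ℝ) ^ (-((k : ℤ) + 1))) : ℝ) ^ 2 ≤
      M * Real.exp ((2 : ℝ) ^ (α * ((k : ℝ) + 1))))
    {ε : ℝ} (hε : 0 < ε) (hε1 : ε ≤ 1) :
    (coveringNumber K ε : ℝ) ^ 2 ≤ M * Real.exp ((2 / ε) ^ α) := by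
  obtain ⟨n, hn, hn1⟩ := exists_nat_pow_near (one_le_one_div hε hε1) one_lt_two
  have hdyadic_eq : (2 : ℝ) ^ (-((n : ℤ) + 1)) = (2 ^ (n + 1))⁻¹ := by
    rw [zpow_neg]; norm_cast
  have hscale : (2 : ℝ) ^ (-((n : ℤ) + 1)) ≤ ε := by
    rw [hdyadic_eq]
    exact inv_le_of_inv_le₀ hε (by simpa using hn1.le)
  have hexponent : (2 : ℝ) ^ (α * ((n : ℝ) + 1)) ≤ (2 / ε) ^ α := by
    rw [mul_comm, Real.rpow_mul zero_le_two]
    refine Real.rpow_le_rpow (by positivity) ?_ hα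
    rw [show (n : ℝ) + 1 = ((n + 1 : ℕ) : ℝ) by push_cast; ring, Real.rpow_natCast, pow_succ,
      le_div_iff₀ hε]
    nlinarith [(le_div_iff₀ hε).1 hn]
  calc (coveringNumber K ε : ℝ) ^ 2
      ≤ (coveringNumber K ((2 : ℝ) ^ (-((n : ℤ) + 1))) : ℝ) ^ 2 := by
        gcongr
        exact hK.coveringNumber_anti (by positivity) hscale
    _ ≤ M * Real.exp ((2 : ℝ) ^ (α * ((n : ℝ) + 1))) := hdyadic n
    _ ≤ M * Real.exp ((2 / ε) ^ α) := by gcongr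

end CoveringNumber

lemma exists_sq_le_mul_exp_of_summable {a b : ℕ → ℝ}
    (h : Summable fun k => a k ^ 2 * Real.exp (-b k)) :
    ∃ M, 1 ≤ M ∧ ∀ k, a k ^ 2 ≤ M * Real.exp (b k) := by
  refine ⟨max (∑' k, a k ^ 2 * Real.exp (-b k)) 1, le_max_right _ _, fun k => ?_⟩
  have hterm : a k ^ 2 * Real.exp (-b k) ≤ max (∑' k, a k ^ 2 * Real.exp (-b k)) 1 :=
    (h.le_tsum k fun _ _ => by positivity).trans (le_max_left _ _)
  rwa [Real.exp_neg, ← div_eq_mul_inv, div_le_iff₀ (Real.exp_pos _)] at hterm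

lemma Real.log_natCast_le_of_sq_le_mul_exp {n : ℕ} {M x : ℝ} (hM : 1 ≤ M) (hx : 0 ≤ x)
    (h : (n : ℝ) ^ 2 ≤ M * Real.exp x) : Real.log n ≤ Real.log M + x := by
  rcases n.eq_zero_or_pos with rfl | hn
  · simpa using add_nonneg (Real.log_nonneg hM) hx
  have hlog_sq := Real.log_le_log (by positivity) h
  rw [Real.log_pow, Real.log_mul (by positivity) (Real.exp_pos x).ne', Real.log_exp] at hlog_sq
  push_cast at hlog_sq
  linarith [Real.log_natCast_nonneg n]

lemma Real.sqrt_le_sqrt_add_of_le_add_sq {x a b : ℝ} (ha : 0 ≤ a) (hb : 0 ≤ b)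
    (h : x ≤ a + b ^ 2) : √x ≤ √a + b :=
  Real.sqrt_le_iff.2 ⟨by positivity, by nlinarith [Real.sq_sqrt ha, Real.sqrt_nonneg a]⟩

lemma setLIntegral_Ioo_zero_one_ofReal_lt_top_of_le_rpow {f : ℝ → ℝ} {A B β : ℝ} (hβ : β < 1)
    (hf : ∀ u ∈ Ioo (0 : ℝ) 1, f u ≤ A + B * u ^ (-β)) :
    ∫⁻ u in Ioo (0 : ℝ) 1, ENNReal.ofReal (f u) < ⊤ := by
  have hint : IntegrableOn (fun u : ℝ => A + B * u ^ (-β)) (Ioo (0 : ℝ) 1) :=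
    (integrableOn_const measure_Ioo_lt_top.ne).add
      (((intervalIntegral.integrableOn_Ioo_rpow_iff one_pos).2 (by linarith)).const_mul B)
  calc ∫⁻ u in Ioo (0 : ℝ) 1, ENNReal.ofReal (f u)
      ≤ ∫⁻ u in Ioo (0 : ℝ) 1, ENNReal.ofReal (A + B * u ^ (-β)) :=
        setLIntegral_mono (by fun_prop) fun u hu => ENNReal.ofReal_le_ofReal (hf u hu)
    _ < ⊤ := hint.lintegral_lt_top

lemma two_div_pow_four_rpow_eq_sq {u : ℝ} (hu : 0 < u) (α : ℝ) :
    (2 / u ^ 4) ^ α = (2 ^ (α / 2) * u ^ (-(2 * α))) ^ 2 := by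
  rw [mul_pow, ← Real.rpow_mul_natCast zero_le_two, ← Real.rpow_mul_natCast hu.le,
    Real.div_rpow zero_le_two (by positivity), ← Real.rpow_natCast u 4, ← Real.rpow_mul hu.le,
    div_eq_mul_inv, ← Real.rpow_neg hu.le]
  ring_nf

theorem stmt9_general {F : Type*} [MetricSpace F] (K : Set F)
    (hKc : IsCompact K) (α : ℝ) (hα : α ∈ Set.Ioo (0 : ℝ) (1 / 2))
    (hsum : Summable (fun k : ℕ =>
      ((coveringNumber K ((2 : ℝ) ^ (-((k : ℤ) + 1))) : ℝ)) ^ 2 *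
        Real.exp (-(2 : ℝ) ^ (α * ((k : ℝ) + 1))))) :
    ∫⁻ u in Set.Ioo (0 : ℝ) 1,
      ENNReal.ofReal (Real.sqrt (Real.log (coveringNumber K (u ^ 4)))) < ⊤ := by
  obtain ⟨hα0, hα2⟩ := hα
  obtain ⟨M, hM1, hdyadic⟩ := exists_sq_le_mul_exp_of_summable hsum
  refine setLIntegral_Ioo_zero_one_ofReal_lt_top_of_le_rpow (A := √(Real.log M))
    (B := 2 ^ (α / 2)) (β := 2 * α) (by linarith) fun u ⟨hu0, hu1⟩ => ?_
  have hε : 0 < u ^ 4 := by positivity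
  have hsq := hKc.coveringNumber_sq_le_of_dyadic hα0.le (by linarith) hdyadic hε
    (pow_le_one₀ hu0.le hu1.le)
  have hlog := Real.log_natCast_le_of_sq_le_mul_exp hM1 (by positivity) hsq
  refine Real.sqrt_le_sqrt_add_of_le_add_sq (Real.log_nonneg hM1) (by positivity) (hlog.trans ?_)
  rw [two_div_pow_four_rpow_eq_sq hu0]

/-- (From the proof of joint continuity of local times: the summability condition implies
Dudley's entropy-integral condition for the snowflaked metric `R^{1/4}`.)
If `K` is a nonempty compact subset of a metric space `(F,R)` and there is `α ∈ (0,1/2)` with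
`Σ_{k ≥ 1} N_R(K, 2^{-k})² exp(-2^{α k}) < ∞`, then
`∫₀¹ (log N_R(K, u⁴))^{1/2} du < ∞`. -/
theorem stmt9 {F : Type*} [MetricSpace F] (K : Set F) (hKne : K.Nonempty)
    (hKc : IsCompact K) (α : ℝ) (hα : α ∈ Set.Ioo (0 : ℝ) (1 / 2))
    (hsum : Summable (fun k : ℕ =>
      ((coveringNumber K ((2 : ℝ) ^ (-((k : ℤ) + 1))) : ℝ)) ^ 2 *
        Real.exp (-(2 : ℝ) ^ (α * ((k : ℝ) + 1))))) :
    ∫⁻ u in Set.Ioo (0 : ℝ) 1,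
      ENNReal.ofReal (Real.sqrt (Real.log (coveringNumber K (u ^ 4)))) < ⊤ :=
  stmt9_general K hKc α hα hsum
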